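/- arXiv:math/0305355 — 2 statements merged into one kernel-verified Lean document; each statement's English description precedes it below -/
import Mathlib

section
/- For the Michaelis–Menten–Henri system with parameters κ > λ > 0, the first-iteration CSP condition (one-step method with stoichiometric initial basis) reads F₁(s,c,ε) := s − (s+κ)c − ε κ(−s + (s+κ−λ)c)/(s+κ)² = 0. Setting c(s,ε) = s/(s+κ) + ε κλs/(s+κ)⁴ − ε² κ²λs(s+κ−λ)/(s+κ)⁷, the coefficients of ε⁰, ε¹, and ε² in F₁(s, c(s,ε), ε) vanish identically for all s ≥ 0; hence the first CSP manifold agrees with the slow manifold c = h0(s) + ε h1(s) + O(ε²) up to and including terms of order ε. -/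
/-- The first-iteration CSP condition for the MMH system (one-step method with
stoichiometric initial basis): `F₁(s,c,ε) = s − (s+κ)c − ε κ(−s + (s+κ−λ)c)/(s+κ)²`. -/
noncomputable def mmhF1 (κ lam : ℝ) (s c ε : ℝ) : ℝ :=
  s - (s + κ) * c - ε * (κ * (-s + (s + κ - lam) * c) / (s + κ) ^ 2)

/-- The expansion of the first CSP manifold:
`c(s,ε) = s/(s+κ) + ε κλs/(s+κ)⁴ − ε² κ²λs(s+κ−λ)/(s+κ)⁷`. -/
noncomputable def mmhPsi1 (κ lam : ℝ) (s ε : ℝ) : ℝ :=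
  s / (s + κ) + ε * (κ * lam * s / (s + κ) ^ 4)
    - ε ^ 2 * (κ ^ 2 * lam * s * (s + κ - lam) / (s + κ) ^ 7)

/-- for the MMH system with `κ > λ > 0`, substituting the expansion of the
first CSP manifold into the first-iteration CSP condition `F₁ = 0` makes the coefficients
of `ε⁰`, `ε¹`, `ε²` vanish identically for all `s ≥ 0` (the composite is a polynomial in
`ε` of degree at most `3`); hence the first CSP manifold agrees with the slow manifold
up to and including terms of order `ε`. -/
theorem mmh_first_csp_iteration (κ lam : ℝ) (hlam : 0 < lam) (hκ : lam < κ) :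
    ∀ s : ℝ, 0 ≤ s →
      ∃ r3 : ℝ, ∀ ε : ℝ,
        mmhF1 κ lam s (mmhPsi1 κ lam s ε) ε = ε ^ 3 * r3 := by
  intro s hs
  have hu : s + κ ≠ 0 := by nlinarith
  exact ⟨κ ^ 3 * lam * s * (s + κ - lam) ^ 2 / (s + κ) ^ 9, fun ε => by
    unfold mmhF1 mmhPsi1; field_simp; ring⟩
end

section
/- For the Michaelis–Menten–Henri system with parameters κ > λ > 0, the second-iteration one-step CSP condition reads F₂(s,c,ε) := s − (s+κ)c − ε κ(−s + (s+κ−λ)c)/(s+κ)² + ε² κλ(3s−κ)(−s + (s+κ−λ)c)/(s+κ)⁵ = 0 (up to O(ε³)). Setting c(s,ε) = s/(s+κ) + ε κλs/(s+κ)⁴ + ε² κλs(2κλ − 3λs − κs − κ²)/(s+κ)⁷, the coefficients of ε⁰, ε¹, and ε² in F₂(s, c(s,ε), ε) vanish identically for all s ≥ 0; hence after two iterations the CSP manifold agrees with the slow manifold up to and including terms of order ε². -/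
/-- The second-iteration one-step CSP condition for the MMH system (truncated at `ε²`):
`F₂(s,c,ε) = s − (s+κ)c − ε κ(−s+(s+κ−λ)c)/(s+κ)² + ε² κλ(3s−κ)(−s+(s+κ−λ)c)/(s+κ)⁵`. -/
noncomputable def mmhF2 (κ lam : ℝ) (s c ε : ℝ) : ℝ :=
  s - (s + κ) * c - ε * (κ * (-s + (s + κ - lam) * c) / (s + κ) ^ 2)
    + ε ^ 2 * (κ * lam * (3 * s - κ) * (-s + (s + κ - lam) * c) / (s + κ) ^ 5)

/-- The expansion of the second CSP manifold, which agrees with the slow manifold through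
order `ε²`: `c(s,ε) = s/(s+κ) + ε κλs/(s+κ)⁴ + ε² κλs(2κλ − 3λs − κs − κ²)/(s+κ)⁷`. -/
noncomputable def mmhPsi2 (κ lam : ℝ) (s ε : ℝ) : ℝ :=
  s / (s + κ) + ε * (κ * lam * s / (s + κ) ^ 4)
    + ε ^ 2 * (κ * lam * s * (2 * κ * lam - 3 * lam * s - κ * s - κ ^ 2) / (s + κ) ^ 7)

/-- for the MMH system with `κ > λ > 0`, substituting the second CSP
manifold expansion into the second-iteration one-step CSP condition `F₂ = 0` makes the
coefficients of `ε⁰`, `ε¹`, `ε²` vanish identically for all `s ≥ 0` (the composite is a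
polynomial in `ε` of degree at most `4`); hence after two iterations the CSP manifold
agrees with the slow manifold up to and including terms of order `ε²`. -/
theorem mmh_second_csp_iteration (κ lam : ℝ) (hlam : 0 < lam) (hκ : lam < κ) :
    ∀ s : ℝ, 0 ≤ s →
      ∃ r3 r4 : ℝ, ∀ ε : ℝ,
        mmhF2 κ lam s (mmhPsi2 κ lam s ε) ε = ε ^ 3 * r3 + ε ^ 4 * r4 := by
  intro s hs
  have hD : s + κ ≠ 0 := by nlinarith
  refine ⟨(3*s*κ^7*lam^3 + (-4)*s*κ^8*lam^2 + s*κ^9*lam + 6*s^2*κ^6*lam^3 + (-14)*s^2*κ^7*lam^2 + 6*s^2*κ^8*lam + (-6)*s^3*κ^5*lam^3 + (-10)*s^3*κ^6*lam^2 + 15*s^3*κ^7*lam + (-24)*s^4*κ^4*lam^3 + 20*s^4*κ^5*lam^2 + 20*s^4*κ^6*lam + (-21)*s^5*κ^3*lam^3 + 40*s^5*κ^4*lam^2 + 15*s^5*κ^5*lam + (-6)*s^6*κ^2*lam^3 + 26*s^6*κ^3*lam^2 + 6*s^6*κ^4*lam + 6*s^7*κ^2*lam^2 + s^7*κ^3*lam)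 / (s+κ)^13,
    (2*s*κ^5*lam^4 + (-3)*s*κ^6*lam^3 + s*κ^7*lam^2 + (-7)*s^2*κ^4*lam^4 + 6*s^2*κ^5*lam^3 + 12*s^3*κ^4*lam^3 + (-6)*s^3*κ^5*lam^2 + 9*s^4*κ^2*lam^4 + (-6)*s^4*κ^3*lam^3 + (-8)*s^4*κ^4*lam^2 + (-9)*s^5*κ^2*lam^3 + (-3)*s^5*κ^3*lam^2) / (s+κ)^13, ?_⟩
  intro ε
  simp only [mmhF2, mmhPsi2]
  field_simp
  ring
end
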